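/- arXiv:2605.27982 — 4 statements merged into one kernel-verified Lean document; each statement's English description precedes it below -/
import Mathlib

section
/- For every integer m ≥ 2, the number of endomorphisms of the dihedral group of order 2m equals m² + 1 if m is odd, and m² + 4m + 4 if m is even. That is, Nat.card (DihedralGroup m →* DihedralGroup m) = m² + 1 for odd m and = m² + 4m + 4 for even m. -/
/-!
An endomorphism of `DihedralGroup n = ⟨x, y | xⁿ = y² = 1, y x y = x⁻¹⟩` is the same as a pair
`(x, y)` of elements satisfying these relations. Counting such pairs in `DihedralGroup n`, with
`t` the number of `c : ZMod n` with `2c = 0`: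
* `x = r a`: every `y = sr b` works, and `y = r b` works iff `2a = 2b = 0`, giving `n² + t²`;
* `x = sr a` needs `n` even, and then `y = r b` works iff `2b = 0`, `y = sr b` iff `2(b - a) = 0`,
  giving `2nt`.
Finally `t = 1` for odd `n` and `t = 2` for even `n`.
-/

open Finset

theorem zpow_eq_zpow_of_modEq {G : Type*} [Group G] {n : ℕ} {x : G} {a b : ℤ}
    (h : a ≡ b [ZMOD n]) (hx : x ^ n = 1) : x ^ a = x ^ b := by
  rw [zpow_eq_zpow_iff_modEq]
  exact h.of_dvd (Int.natCast_dvd_natCast.2 (orderOf_dvd_of_pow_eq_one hx))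

theorem zpow_mul_eq_mul_zpow_neg {G : Type*} [Group G] {x y : G} (hy : y * y = 1)
    (hyx : y * x * y = x⁻¹) (k : ℤ) : x ^ k * y = y * x ^ (-k) := by
  have hyinv : y⁻¹ = y := inv_eq_of_mul_eq_one_right hy
  have hconj : y * x ^ k * y = x ^ (-k) := by
    nth_rw 2 [← hyinv]
    rw [← conj_zpow, hyinv, hyx, inv_zpow, zpow_neg]
  rw [← hconj, ← mul_assoc, ← mul_assoc, hy, one_mul]

theorem ZMod.card_add_self_eq_zero_of_odd {n : ℕ} [NeZero n] (hn : Odd n) :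
    #{c : ZMod n | c + c = 0} = 1 :=
  Finset.card_eq_one.2 ⟨0, by ext c; simp [ZMod.add_self_eq_zero_iff_eq_zero hn]⟩

theorem ZMod.card_add_self_eq_zero_of_even {n : ℕ} [NeZero n] (hn : Even n) :
    #{c : ZMod n | c + c = 0} = 2 := by
  obtain ⟨k, rfl⟩ := hn
  have hk : k ≠ 0 := fun hk => NeZero.ne (k + k) (by omega)
  have hval : (k : ZMod (k + k)).val = k := ZMod.val_cast_of_lt (by omega)
  refine Finset.card_eq_two.2 ⟨0, k, fun h => hk ?_, ?_⟩
  · rw [← hval, ← h, ZMod.val_zero]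
  · ext c
    simp only [mem_filter, mem_univ, true_and, mem_insert, mem_singleton,
      ← neg_eq_iff_add_eq_zero, ZMod.neg_eq_self_iff]
    refine or_congr_right ⟨fun h => ?_, fun h => ?_⟩
    · rw [← ZMod.natCast_zmod_val c]
      congr 1
      omega
    · rw [h, hval]
      ring

namespace DihedralGroup

variable {n : ℕ} {G : Type*} [Group G]

def IsDihedralPair (n : ℕ) (x y : G) : Prop := x ^ n = 1 ∧ y * y = 1 ∧ y * x * y = x⁻¹

instance [DecidableEq G] (x y : G) : Decidable (IsDihedralPair n x y) :=
  inferInstanceAs (Decidable (_ ∧ _ ∧ _))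

def lift {x y : G} (h : IsDihedralPair n x y) : DihedralGroup n →* G where
  toFun
    | r i => x ^ (i.cast : ℤ)
    | sr i => y * x ^ (i.cast : ℤ)
  map_one' := by
    rw [one_def]
    simp
  map_mul' := by
    obtain ⟨hx, hy, hyx⟩ := h
    have hcast {a b : ℤ} (hab : (a : ZMod n) = b) : x ^ a = x ^ b :=
      zpow_eq_zpow_of_modEq ((ZMod.intCast_eq_intCast_iff _ _ _).1 hab) hx
    rintro (i | i) (j | j) <;> simp only [r_mul_r, r_mul_sr, sr_mul_r, sr_mul_sr]
    · rw [← zpow_add]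
      exact hcast (by push_cast [ZMod.intCast_zmod_cast]; rfl)
    · rw [← mul_assoc, zpow_mul_eq_mul_zpow_neg hy hyx, mul_assoc, ← zpow_add]
      exact congrArg _ (hcast (by push_cast [ZMod.intCast_zmod_cast]; ring))
    · rw [mul_assoc, ← zpow_add]
      exact congrArg _ (hcast (by push_cast [ZMod.intCast_zmod_cast]; rfl))
    · rw [mul_assoc, ← mul_assoc (x ^ _), zpow_mul_eq_mul_zpow_neg hy hyx, ← mul_assoc,
        ← mul_assoc, hy, one_mul, ← zpow_add]
      exact hcast (by push_cast [ZMod.intCast_zmod_cast]; ring)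

@[simp]
theorem lift_r {x y : G} (h : IsDihedralPair n x y) (i : ZMod n) :
    lift h (r i) = x ^ (i.cast : ℤ) :=
  rfl

@[simp]
theorem lift_sr {x y : G} (h : IsDihedralPair n x y) (i : ZMod n) :
    lift h (sr i) = y * x ^ (i.cast : ℤ) :=
  rfl

def monoidHomEquiv : (DihedralGroup n →* G) ≃ {p : G × G // IsDihedralPair n p.1 p.2} where
  toFun f := ⟨(f (r 1), f (sr 0)), by
    refine ⟨?_, ?_, ?_⟩
    · rw [← map_pow, r_one_pow_n, map_one]
    · rw [← map_mul, sr_mul_self, map_one]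
    · rw [← map_mul, ← map_mul, ← map_inv, sr_mul_r, sr_mul_sr, inv_r]
      congr 2
      ring⟩
  invFun p := lift p.2
  left_inv f := by
    ext (i | i)
    · rw [lift_r, ← map_zpow, r_one_zpow, ZMod.intCast_zmod_cast]
    · rw [lift_sr, ← map_zpow, r_one_zpow, ZMod.intCast_zmod_cast, ← map_mul, sr_mul_r, zero_add]
  right_inv := by
    rintro ⟨⟨x, y⟩, h⟩
    ext
    · exact (zpow_eq_zpow_of_modEq ((ZMod.intCast_eq_intCast_iff _ _ _).1 (by simp)) h.1).trans
        (zpow_one x)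
    · simp

theorem r_pow_eq_one (a : ZMod n) : r a ^ n = 1 := by
  rw [r_pow, ZMod.natCast_self, mul_zero, r_zero]

theorem sr_pow_eq_one_iff (a : ZMod n) : sr a ^ n = 1 ↔ Even n := by
  rw [← orderOf_dvd_iff_pow_eq_one, orderOf_sr, even_iff_two_dvd]

theorem isDihedralPair_r_r (a b : ZMod n) :
    IsDihedralPair n (r a) (r b) ↔ b + b = 0 ∧ a + a = 0 := by
  simp only [IsDihedralPair, r_pow_eq_one, inv_r, r_mul_r, ← r_zero, r.injEq, true_and]
  refine and_congr_right fun hb => ⟨fun h => ?_, fun h => ?_⟩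
  · linear_combination h - hb
  · linear_combination h + hb

theorem isDihedralPair_r_sr (a b : ZMod n) : IsDihedralPair n (r a) (sr b) := by
  refine ⟨r_pow_eq_one a, sr_mul_self b, ?_⟩
  rw [sr_mul_r, sr_mul_sr, inv_r]
  ring_nf

theorem isDihedralPair_sr_r (a b : ZMod n) :
    IsDihedralPair n (sr a) (r b) ↔ Even n ∧ b + b = 0 := by
  rw [IsDihedralPair, sr_pow_eq_one_iff]
  simp only [inv_sr, r_mul_r, r_mul_sr, sr_mul_r, ← r_zero, r.injEq, sub_add_cancel, and_true]

theorem isDihedralPair_sr_sr (a b : ZMod n) :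
    IsDihedralPair n (sr a) (sr b) ↔ Even n ∧ (b - a) + (b - a) = 0 := by
  simp only [IsDihedralPair, sr_pow_eq_one_iff, inv_sr, sr_mul_self, sr_mul_sr, r_mul_sr, sr.injEq,
    true_and]
  exact and_congr_right fun _ => ⟨fun h => by linear_combination h, fun h => by linear_combination h⟩

variable [NeZero n]

theorem sum_univ {M : Type*} [AddCommMonoid M] (f : DihedralGroup n → M) :
    ∑ g, f g = ∑ i, f (r i) + ∑ i, f (sr i) := by
  rw [← equivSum.symm.sum_comp, Fintype.sum_sum_type]
  rfl

theorem card_filter_univ (P : DihedralGroup n → Prop) [DecidablePred P] :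
    #{g | P g} = #{i | P (r i)} + #{i | P (sr i)} := by
  simp only [card_filter, sum_univ]

theorem card_isDihedralPair_r (a : ZMod n) :
    #{y | IsDihedralPair n (r a) y} = n + if a + a = 0 then #{c : ZMod n | c + c = 0} else 0 := by
  rw [card_filter_univ]
  by_cases ha : a + a = 0 <;> simp [isDihedralPair_r_r, isDihedralPair_r_sr, ha, add_comm]

theorem card_isDihedralPair_sr (a : ZMod n) :
    #{y | IsDihedralPair n (sr a) y} = if Even n then 2 * #{c : ZMod n | c + c = 0} else 0 := by
  have shift : #{b : ZMod n | (b - a) + (b - a) = 0} = #{c : ZMod n | c + c = 0} :=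
    card_equiv (Equiv.subRight a) (by simp)
  rw [card_filter_univ]
  by_cases he : Even n <;> simp [isDihedralPair_sr_r, isDihedralPair_sr_sr, he, shift, two_mul]

theorem card_isDihedralPair :
    Nat.card {p : DihedralGroup n × DihedralGroup n // IsDihedralPair n p.1 p.2} =
      n ^ 2 + #{c : ZMod n | c + c = 0} ^ 2 +
        if Even n then 2 * n * #{c : ZMod n | c + c = 0} else 0 := by
  rw [Nat.card_eq_fintype_card, Fintype.card_subtype, card_filter, Fintype.sum_prod_type]
  simp only [← card_filter]
  rw [sum_univ]
  simp only [card_isDihedralPair_r, card_isDihedralPair_sr]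
  split_ifs <;>
    simp only [sum_add_distrib, sum_ite, sum_const, card_univ, ZMod.card, smul_eq_mul, mul_zero,
      add_zero] <;>
    ring

end DihedralGroup

theorem dihedral_endomorphism_count (m : ℕ) (hm : 2 ≤ m) :
    (Odd m → Nat.card (DihedralGroup m →* DihedralGroup m) = m ^ 2 + 1) ∧
    (Even m → Nat.card (DihedralGroup m →* DihedralGroup m) = m ^ 2 + 4 * m + 4) := by
  have : NeZero m := ⟨by omega⟩
  rw [Nat.card_congr DihedralGroup.monoidHomEquiv, DihedralGroup.card_isDihedralPair]
  refine ⟨fun hodd => ?_, fun heven => ?_⟩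
  · rw [if_neg (Nat.not_even_iff_odd.2 hodd), ZMod.card_add_self_eq_zero_of_odd hodd]
    ring
  · rw [if_pos heven, ZMod.card_add_self_eq_zero_of_even heven]
    ring
end

section
/- The proportion of endomorphisms of the symmetric group on n letters that are automorphisms tends to 1: the sequence n ↦ (Nat.card {φ : Equiv.Perm (Fin n) →* Equiv.Perm (Fin n) // Function.Bijective φ} : ℝ) / (Nat.card (Equiv.Perm (Fin n) →* Equiv.Perm (Fin n))) tends to 1 as n → ∞ (Filter.Tendsto along atTop to nhds 1). -/
/-!
An endomorphism of `Sₙ` (`n ≥ 5`) that is not injective has a nontrivial normal kernel, which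
therefore contains `Aₙ`; such an endomorphism is determined by the image of one transposition,
an element `x` with `x² = 1`. An involution is determined by its set of excedances
`{i | i < σ i}`, which has at most `n / 2` elements, together with its values there, so
there are at most `2 ^ n * n ^ (n / 2)` of them. This is `o(n!)`, while the inner
automorphisms already give `n!` automorphisms because the centre of `Sₙ` is trivial.
-/

open Equiv Function Finset Filter Topology

instance MonoidHom.finite {G H : Type*} [MulOneClass G] [MulOneClass H] [Finite G] [Finite H] :
    Finite (G →* H) :=
  .of_injective _ DFunLike.coe_injective

theorem MulAut.ker_conj (G : Type*) [Group G] :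
    (MulAut.conj : G →* MulAut G).ker = Subgroup.center G := by
  ext g
  simp only [MonoidHom.mem_ker, MulEquiv.ext_iff, MulAut.conj_apply, MulAut.one_apply,
    Subgroup.mem_center_iff]
  exact forall_congr' fun x => by rw [mul_inv_eq_iff_eq_mul, eq_comm]

theorem card_le_card_bijective_of_center_eq_bot {G : Type*} [Group G] [Finite G]
    (hG : Subgroup.center G = ⊥) : Nat.card G ≤ Nat.card {φ : G →* G // Bijective φ} := by
  have hconj : Injective (MulAut.conj : G →* MulAut G) := by
    rw [← MonoidHom.ker_eq_bot_iff, MulAut.ker_conj, hG]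
  refine Nat.card_le_card_of_injective (fun g => ⟨MulAut.conj g, (MulAut.conj g).bijective⟩)
    fun g h hgh => hconj (MulEquiv.ext fun x => ?_)
  exact DFunLike.congr_fun (congrArg Subtype.val hgh) x

theorem card_monoidHom_eq_card_bijective_add_card_not_injective (G : Type*) [Group G] [Finite G] :
    Nat.card (G →* G) =
      Nat.card {φ : G →* G // Bijective φ} + Nat.card {φ : G →* G // ¬ Injective φ} := by
  classical
  rw [← Nat.card_sum]
  exact Nat.card_congr ((Equiv.sumCompl fun φ : G →* G => Bijective φ).symm.trans
    (Equiv.sumCongr (Equiv.refl _) (Equiv.subtypeEquivRight fun φ =>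
      not_congr Finite.injective_iff_bijective.symm)))

section Factorial
open scoped Nat

theorem Nat.two_pow_mul_pow_half_mul_factorial_le (n : ℕ) :
    2 ^ n * n ^ (n / 2) * (n / 2)! ≤ 2 * 8 ^ (n / 2) * n ! := by
  set k := n / 2
  have h2 : 2 ^ n ≤ 2 * 4 ^ k := by
    calc 2 ^ n ≤ 2 ^ (2 * k + 1) := Nat.pow_le_pow_right two_pos (by omega)
      _ = 2 * 4 ^ k := by rw [pow_succ, pow_mul]; ring
  have hn : n ^ k ≤ 2 ^ k * (k + 1) ^ k := by
    rw [← mul_pow]; exact Nat.pow_le_pow_left (by omega) k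
  have hfac : k ! * (k + 1) ^ k ≤ n ! :=
    Nat.factorial_mul_pow_le_factorial.trans (Nat.factorial_le (by omega))
  calc 2 ^ n * n ^ k * k ! ≤ 2 * 4 ^ k * (2 ^ k * (k + 1) ^ k) * k ! := by gcongr
    _ = 2 * 8 ^ k * (k ! * (k + 1) ^ k) := by
      rw [show (8 : ℕ) = 4 * 2 by rfl, mul_pow]; ring
    _ ≤ 2 * 8 ^ k * n ! := by gcongr

theorem tendsto_two_pow_mul_pow_half_div_factorial :
    Tendsto (fun n : ℕ => (2 ^ n * n ^ (n / 2) : ℝ) / n !) atTop (𝓝 0) := by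
  have hlim : Tendsto (fun n : ℕ => 2 * ((8 : ℝ) ^ (n / 2) / (n / 2)!)) atTop (𝓝 0) := by
    simpa using ((FloorSemiring.tendsto_pow_div_factorial_atTop (8 : ℝ)).comp
      (Nat.tendsto_div_const_atTop two_ne_zero)).const_mul 2
  refine squeeze_zero (fun n => by positivity) (fun n => ?_) hlim
  rw [div_le_iff₀ (by positivity), mul_div_assoc', div_mul_eq_mul_div,
    le_div_iff₀ (by positivity)]
  exact_mod_cast Nat.two_pow_mul_pow_half_mul_factorial_le n

end Factorial

theorem one_sub_div_le_div_add {b k f i : ℝ} (hf : 0 < f) (hfb : f ≤ b) (hk : 0 ≤ k)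
    (hki : k ≤ i) : 1 - i / f ≤ b / (b + k) := by
  have hb : 0 < b := hf.trans_le hfb
  have hdiv : k / (b + k) ≤ i / f :=
    calc k / (b + k) ≤ k / f := by gcongr; linarith
      _ ≤ i / f := by gcongr
  calc 1 - i / f ≤ 1 - k / (b + k) := sub_le_sub_left hdiv 1
    _ = b / (b + k) := by field_simp; ring

namespace Equiv.Perm

variable {α : Type*}

theorem involutive_of_sq_eq_one {σ : Perm α} (h : σ ^ 2 = 1) : Involutive σ := fun i => by
  rw [← mul_apply, ← sq, h, one_apply]

section Excedances

variable [Fintype α] [LinearOrder α]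

def excedances (σ : Perm α) : Finset α := {i | i < σ i}

theorem mem_excedances {σ : Perm α} {i : α} : i ∈ excedances σ ↔ i < σ i := by
  simp [excedances]

theorem two_mul_card_excedances_le {σ : Perm α} (hσ : Involutive σ) :
    2 * #(excedances σ) ≤ Fintype.card α := by
  have hdisj : _root_.Disjoint (excedances σ) ((excedances σ).map σ.toEmbedding) := by
    simp only [disjoint_left, Finset.mem_map, mem_excedances, coe_toEmbedding, not_exists, not_and]
    rintro _ hi j hj rfl
    rw [hσ] at hi
    exact lt_asymm hi hj
  calc 2 * #(excedances σ) = #(excedances σ ∪ (excedances σ).map σ.toEmbedding) := by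
        rw [card_union_of_disjoint hdisj, card_map, two_mul]
    _ ≤ Fintype.card α := card_le_univ _

theorem apply_eq_of_apply_lt {σ τ : Perm α} (hσ : Involutive σ) (hτ : Involutive τ)
    (h : ∀ j ∈ excedances σ, σ j = τ j) {i : α} (hi : σ i < i) : σ i = τ i := by
  have : τ (σ i) = i := by rw [← h _ (mem_excedances.2 (by rwa [hσ])), hσ]
  exact (hτ (σ i)).symm.trans (congrArg τ this)

theorem eq_of_excedances_eq {σ τ : Perm α} (hσ : Involutive σ) (hτ : Involutive τ)
    (hexc : excedances σ = excedances τ) (h : ∀ i ∈ excedances σ, σ i = τ i) : σ = τ := by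
  ext i
  rcases lt_trichotomy (σ i) i with hσi | hσi | hσi
  · exact apply_eq_of_apply_lt hσ hτ h hσi
  · rcases lt_trichotomy (τ i) i with hτi | hτi | hτi
    · exact (apply_eq_of_apply_lt hτ hσ (fun j hj => (h j (hexc ▸ hj)).symm) hτi).symm
    · rw [hσi, hτi]
    · rw [← mem_excedances, ← hexc, mem_excedances, hσi] at hτi
      exact absurd hτi (lt_irrefl i)
  · exact h i (mem_excedances.2 hσi)

theorem card_sq_eq_one_le :
    Nat.card {σ : Perm α // σ ^ 2 = 1} ≤
      2 ^ Fintype.card α * Fintype.card α ^ (Fintype.card α / 2) := by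
  set n := Fintype.card α
  set s : Finset (Perm α) := {σ | σ ^ 2 = 1}
  have hfiber : ∀ S ∈ s.image excedances, #{σ ∈ s | excedances σ = S} ≤ n ^ (n / 2) := by
    intro S hS
    obtain ⟨σ₀, hσ₀, rfl⟩ := mem_image.1 hS
    have hk := two_mul_card_excedances_le (involutive_of_sq_eq_one (mem_filter.1 hσ₀).2)
    have hinj : Set.InjOn (fun (σ : Perm α) (i : excedances σ₀) => σ i)
        (({σ ∈ s | excedances σ = excedances σ₀} : Finset (Perm α)) : Set (Perm α)) := by
      intro σ hσ τ hτ hστ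
      simp only [coe_filter, s, mem_filter, mem_univ, true_and] at hσ hτ
      exact eq_of_excedances_eq (involutive_of_sq_eq_one hσ.1) (involutive_of_sq_eq_one hτ.1)
        (hσ.2.trans hτ.2.symm) fun i hi => congrFun hστ ⟨i, hσ.2 ▸ hi⟩
    calc #{σ ∈ s | excedances σ = excedances σ₀}
        ≤ #(univ : Finset (excedances σ₀ → α)) :=
          card_le_card_of_injOn _ (fun _ _ => mem_coe.2 (mem_univ _)) hinj
      _ = n ^ #(excedances σ₀) := by simp [n]
      _ ≤ n ^ (n / 2) := by
        rcases Nat.eq_zero_or_pos n with hn | hn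
        · simp [hn, show #(excedances σ₀) = 0 by omega]
        · exact Nat.pow_le_pow_right hn (by omega)
  calc Nat.card {σ : Perm α // σ ^ 2 = 1} = #s := by
        rw [Nat.card_eq_fintype_card, Fintype.card_subtype]
    _ ≤ n ^ (n / 2) * #(s.image excedances) := card_le_mul_card_image _ _ hfiber
    _ ≤ n ^ (n / 2) * 2 ^ n := by
        gcongr
        exact (card_le_univ _).trans (by simp [n])
    _ = _ := mul_comm _ _

end Excedances

variable [DecidableEq α] [Fintype α]

theorem center_eq_bot (hα : 3 ≤ Nat.card α) : Subgroup.center (Perm α) = ⊥ := by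
  refine (Subgroup.eq_bot_iff_forall _).2 fun g hg => ?_
  by_contra hg1
  obtain ⟨a, ha⟩ : ∃ a, g a ≠ a := not_forall.1 fun h => hg1 (Equiv.ext h)
  obtain ⟨c, -, hc⟩ := exists_mem_notMem_of_card_lt_card (s := {a, g a}) (t := univ)
    (card_le_two.trans_lt (by rwa [card_univ, ← Nat.card_eq_fintype_card]))
  rw [mem_insert, mem_singleton, not_or] at hc
  have := congrArg (· a) (Subgroup.mem_center_iff.1 hg (swap a c))
  simp only [mul_apply, swap_apply_left, swap_apply_of_ne_of_ne ha (Ne.symm hc.2)] at this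
  exact hc.1 (g.injective this.symm)

variable {G : Type*} [Group G]

theorem alternatingGroup_le_ker (hα : 5 ≤ Nat.card α) {φ : Perm α →* G} (hφ : ¬ Injective φ) :
    alternatingGroup α ≤ φ.ker :=
  alternatingGroup_le_of_normal hα <| by
    rwa [Subgroup.nontrivial_iff_ne_bot, Ne, MonoidHom.ker_eq_bot_iff]

theorem monoidHom_eq_of_map_swap_eq {φ ψ : Perm α →* G} (hφ : alternatingGroup α ≤ φ.ker)
    (hψ : alternatingGroup α ≤ ψ.ker) {a b : α} (hab : a ≠ b) (h : φ (swap a b) = ψ (swap a b)) :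
    φ = ψ := by
  ext g
  by_cases hg : g ∈ alternatingGroup α
  · rw [hφ hg, hψ hg]
  · have hsg : swap a b * g ∈ alternatingGroup α := by
      rw [mem_alternatingGroup, sign_mul, sign_swap hab,
        Int.units_ne_iff_eq_neg.1 (mt mem_alternatingGroup.2 hg), neg_mul_neg, one_mul]
    calc φ g = φ (swap a b) * φ (swap a b * g) := by rw [← map_mul, swap_mul_self_mul]
      _ = ψ (swap a b) * ψ (swap a b * g) := by rw [h, hφ hsg, hψ hsg]
      _ = ψ g := by rw [← map_mul, swap_mul_self_mul]

theorem card_not_injective_le [Finite G] (hα : 5 ≤ Nat.card α) :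
    Nat.card {φ : Perm α →* G // ¬ Injective φ} ≤ Nat.card {x : G // x ^ 2 = 1} := by
  obtain ⟨a, b, hab⟩ := Fintype.exists_pair_of_one_lt_card (α := α)
    (by rw [← Nat.card_eq_fintype_card]; omega)
  refine Nat.card_le_card_of_injective
    (fun φ => ⟨φ.1 (swap a b), by rw [← map_pow, sq, swap_mul_self, map_one]⟩) fun φ ψ h => ?_
  exact Subtype.ext (monoidHom_eq_of_map_swap_eq (alternatingGroup_le_ker hα φ.2)
    (alternatingGroup_le_ker hα ψ.2) hab (congrArg Subtype.val h))

end Equiv.Perm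

theorem symmetric_group_automorphism_proportion :
    Filter.Tendsto (fun n : ℕ =>
      (Nat.card {φ : Equiv.Perm (Fin n) →* Equiv.Perm (Fin n) // Function.Bijective ⇑φ} : ℝ) /
        (Nat.card (Equiv.Perm (Fin n) →* Equiv.Perm (Fin n)) : ℝ))
      Filter.atTop (nhds 1) := by
  simp only [card_monoidHom_eq_card_bijective_add_card_not_injective, Nat.cast_add]
  refine tendsto_of_tendsto_of_tendsto_of_le_of_le'
    (by simpa using tendsto_const_nhds.sub tendsto_two_pow_mul_pow_half_div_factorial)
    tendsto_const_nhds ?_ (Eventually.of_forall fun n => ?_)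
  · filter_upwards [eventually_ge_atTop 5] with n hn
    have hcard : 5 ≤ Nat.card (Fin n) := by simpa
    have hinner : n.factorial ≤ Nat.card {φ : Perm (Fin n) →* Perm (Fin n) // Bijective φ} := by
      have := card_le_card_bijective_of_center_eq_bot (Perm.center_eq_bot (α := Fin n) (by omega))
      rwa [Nat.card_perm, Nat.card_fin] at this
    have hsq : Nat.card {x : Perm (Fin n) // x ^ 2 = 1} ≤ 2 ^ n * n ^ (n / 2) := by
      simpa using Perm.card_sq_eq_one_le (α := Fin n)
    refine one_sub_div_le_div_add (by positivity) (by exact_mod_cast hinner) (by positivity) ?_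
    exact_mod_cast (Perm.card_not_injective_le hcard).trans hsq
  · exact div_le_one_of_le₀ (le_add_of_nonneg_right (Nat.cast_nonneg _)) (by positivity)
end

section
/- For every integer n ≥ 1, the number of elements of the hyperoctahedral group C_n of order at most 2 satisfies, as an identity of rational numbers, Nat.card {w : C_n // w^2 = 1} = Σ_{k=0}^{⌊n/2⌋} 2^n · n! / (2^{2k} · k! · (n−2k)!). -/
/-- The action of `Sₙ` on `(ℤ/2)ⁿ` by permuting coordinates: `(σ • x) i = x (σ⁻¹ i)`. -/
def cnHom (n : ℕ) : Equiv.Perm (Fin n) →* MulAut (Multiplicative (Fin n → ZMod 2)) :=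
  MonoidHom.mk'
    (fun σ => AddEquiv.toMultiplicative
      (AddEquiv.arrowCongr (σ : Fin n ≃ Fin n) (AddEquiv.refl (ZMod 2))))
    (by intro σ τ; ext x; rfl)

/-- The hyperoctahedral group `Cₙ = (ℤ/2)ⁿ ⋊ Sₙ`, the symmetry group of the `n`-cube,
with multiplication `(x, σ)(y, τ) = (x + σ • y, στ)`. -/
abbrev Cn (n : ℕ) : Type :=
  SemidirectProduct (Multiplicative (Fin n → ZMod 2)) (Equiv.Perm (Fin n)) (cnHom n)

/-!
An element `(x, σ)` of `Cₙ` squares to `1` iff `σ` is an involution and `x` is constant on the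
orbits of `σ`. An involution with `k` transpositions has `n - k` orbits, hence contributes
`2 ^ (n - k)` elements, and there are `n! / ((n - 2k)! 2ᵏ k!)` such involutions
(`Equiv.Perm.card_of_cycleType_mul_eq`).
-/

open Finset Nat

namespace Equiv.Perm

theorem apply_apply_of_sq_eq_one {α : Type*} {σ : Perm α} (hσ : σ ^ 2 = 1) (a : α) :
    σ (σ a) = a := by
  rw [← mul_apply, ← sq, hσ, one_apply]

section DecidableEq

variable {α : Type*} [Fintype α] [DecidableEq α]

theorem sq_eq_one_iff_cycleType_eq_replicate {σ : Perm α} :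
    σ ^ 2 = 1 ↔ σ.cycleType = .replicate σ.cycleType.card 2 :=
  ⟨cycleType_of_pow_prime_eq_one, fun h => pow_prime_eq_one_iff.mpr fun _ hc =>
    Multiset.eq_of_mem_replicate (h ▸ hc)⟩

theorem card_support_of_sq_eq_one {σ : Perm α} (hσ : σ ^ 2 = 1) :
    #σ.support = 2 * σ.cycleType.card := by
  rw [← sum_cycleType, sq_eq_one_iff_cycleType_eq_replicate.mp hσ, Multiset.sum_replicate,
    Multiset.card_replicate, smul_eq_mul, mul_comm]

end DecidableEq

section LinearOrder

variable {α : Type*} [LinearOrder α] {σ : Perm α}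

/-- A `σ`-invariant function is determined by its values at the smaller point of each orbit. -/
def invariantFunEquivOfSqEqOne (β : Type*) (hσ : σ ^ 2 = 1) :
    {x : α → β // ∀ a, x (σ a) = x a} ≃ ({a // a ≤ σ a} → β) where
  toFun x a := x.1 a
  invFun y := ⟨fun a => y ⟨min a (σ a), by
      rcases min_choice a (σ a) with h | h <;> rw [h]
      · exact min_eq_left_iff.mp h
      · rw [apply_apply_of_sq_eq_one hσ]; exact min_eq_right_iff.mp h⟩,
    fun a => by simp only [apply_apply_of_sq_eq_one hσ, min_comm]⟩
  left_inv x := by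
    ext a
    rcases min_choice a (σ a) with h | h <;> simp only [h, x.2]
  right_inv y := by
    ext ⟨a, ha⟩
    simp only [min_eq_left ha]

variable [Fintype α]

theorem card_le_apply_of_sq_eq_one (hσ : σ ^ 2 = 1) :
    #{a | a ≤ σ a} = Fintype.card α - σ.cycleType.card := by
  set up : Finset α := {a | a ≤ σ a}
  set down : Finset α := {a | σ a ≤ a}
  have hσσ := apply_apply_of_sq_eq_one hσ
  have hswap : #down = #up :=
    card_nbij' σ σ (fun a ha => by simpa [up, down, hσσ] using ha)
      (fun a ha => by simpa [up, down, hσσ] using ha) (fun a _ => hσσ a) (fun a _ => hσσ a)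
  have hunion : up ∪ down = univ := by
    ext a
    simp [up, down, le_total]
  have hinter : up ∩ down = σ.supportᶜ := by
    ext a
    simp [up, down, le_antisymm_iff, and_comm]
  have hcount := card_union_add_card_inter up down
  rw [hunion, hinter, hswap, card_compl, Finset.card_univ] at hcount
  have := σ.support.card_le_univ
  have := card_support_of_sq_eq_one hσ
  omega

end LinearOrder

variable {α : Type*} [Fintype α] [DecidableEq α]

theorem card_invariant_fun_of_sq_eq_one (β : Type*) {σ : Perm α} (hσ : σ ^ 2 = 1) :
    Nat.card {x : α → β // ∀ a, x (σ a) = x a} =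
      Nat.card β ^ (Fintype.card α - σ.cycleType.card) := by
  let : LinearOrder α := LinearOrder.lift' (Fintype.equivFin α) (Fintype.equivFin α).injective
  rw [Nat.card_congr (invariantFunEquivOfSqEqOne β hσ), Nat.card_fun,
    Nat.card_eq_fintype_card (α := {a // _}), Fintype.card_subtype]
  convert congrArg (Nat.card β ^ ·) (card_le_apply_of_sq_eq_one hσ)

theorem card_cycleType_eq_replicate_two_mul {k : ℕ} (hk : 2 * k ≤ Fintype.card α) :
    #{σ : Perm α | σ.cycleType = .replicate k 2} * ((Fintype.card α - 2 * k)! * 2 ^ k * k !) =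
      (Fintype.card α)! := by
  have h := card_of_cycleType_mul_eq α (.replicate k 2)
  rw [if_pos ⟨by rw [Multiset.sum_replicate, smul_eq_mul]; omega,
    fun _ ha => (Multiset.eq_of_mem_replicate ha).ge⟩, Multiset.sum_replicate,
    Multiset.prod_replicate] at h
  rcases k.eq_zero_or_pos with rfl | hk0
  · simpa using h
  · simpa [Multiset.toFinset_replicate, hk0.ne', mul_comm k 2] using h

theorem sum_sq_eq_one_eq_sum_card_cycleType {M : Type*} [AddCommMonoid M] (f : ℕ → M) :
    ∑ σ : Perm α with σ ^ 2 = 1, f σ.cycleType.card =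
      ∑ k ∈ range (Fintype.card α / 2 + 1), #{σ : Perm α | σ.cycleType = .replicate k 2} • f k := by
  rw [← sum_fiberwise_of_maps_to (g := fun σ : Perm α => σ.cycleType.card)
    (t := range (Fintype.card α / 2 + 1))]
  · refine sum_congr rfl fun k _ => ?_
    rw [sum_congr rfl fun σ hσ => congrArg f (mem_filter.mp hσ).2, sum_const, filter_filter]
    congr 2
    ext σ
    simp only [mem_filter, mem_univ, true_and, sq_eq_one_iff_cycleType_eq_replicate]
    constructor
    · rintro ⟨h, rfl⟩
      exact h
    · intro h
      simp [h]
  · intro σ hσ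
    have hsum := σ.sum_cycleType_le
    rw [sq_eq_one_iff_cycleType_eq_replicate.mp (mem_filter.mp hσ).2, Multiset.sum_replicate,
      smul_eq_mul] at hsum
    rw [mem_range]
    omega

theorem sum_sq_eq_one_two_pow :
    ∑ σ : Perm α with σ ^ 2 = 1, (2 : ℚ) ^ (Fintype.card α - σ.cycleType.card) =
      ∑ k ∈ range (Fintype.card α / 2 + 1),
        (2 : ℚ) ^ Fintype.card α * (Fintype.card α)! /
          (2 ^ (2 * k) * k ! * (Fintype.card α - 2 * k)!) := by
  set n := Fintype.card α
  rw [sum_sq_eq_one_eq_sum_card_cycleType fun k => (2 : ℚ) ^ (n - k)]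
  refine sum_congr rfl fun k hk => ?_
  have h2k : 2 * k ≤ n := by rw [mem_range] at hk; omega
  have hpow : (2 : ℚ) ^ (n - k) * 2 ^ (2 * k) = 2 ^ n * 2 ^ k := by
    rw [← pow_add, ← pow_add]
    congr 1
    omega
  rw [nsmul_eq_mul, eq_div_iff (by positivity), ← card_cycleType_eq_replicate_two_mul h2k]
  push_cast
  linear_combination (#{σ : Perm α | σ.cycleType = .replicate k 2} * k ! * (n - 2 * k)! : ℚ) * hpow

end Equiv.Perm

namespace Cn

open Equiv

variable {n : ℕ}

theorem toAdd_cnHom_apply (σ : Perm (Fin n)) (x : Multiplicative (Fin n → ZMod 2)) (i : Fin n) :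
    (cnHom n σ x).toAdd i = x.toAdd (σ⁻¹ i) :=
  rfl

theorem sq_eq_one_iff (w : Cn n) :
    w ^ 2 = 1 ↔ w.right ^ 2 = 1 ∧ ∀ i, w.left.toAdd (w.right i) = w.left.toAdd i := by
  rw [sq, SemidirectProduct.ext_iff, SemidirectProduct.mul_left, SemidirectProduct.mul_right,
    SemidirectProduct.one_left, SemidirectProduct.one_right, ← sq, and_comm,
    ← Multiplicative.toAdd.injective.eq_iff, toAdd_mul, toAdd_one, funext_iff]
  simp only [Pi.add_apply, Pi.zero_apply, toAdd_cnHom_apply, CharTwo.add_eq_zero]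
  refine and_congr_right fun _ => w.right⁻¹.forall_congr fun {i} => ?_
  rw [← Perm.mul_apply, mul_inv_cancel, Perm.one_apply, eq_comm]

def sqEqOneEquiv (n : ℕ) :
    {w : Cn n // w ^ 2 = 1} ≃
      Σ σ : {σ : Perm (Fin n) // σ ^ 2 = 1}, {x : Fin n → ZMod 2 // ∀ i, x (σ.1 i) = x i} where
  toFun w := ⟨⟨w.1.right, ((sq_eq_one_iff w.1).mp w.2).1⟩,
    ⟨w.1.left.toAdd, ((sq_eq_one_iff w.1).mp w.2).2⟩⟩
  invFun p := ⟨⟨.ofAdd p.2.1, p.1.1⟩, (sq_eq_one_iff _).mpr ⟨p.1.2, p.2.2⟩⟩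
  left_inv _ := rfl
  right_inv _ := rfl

end Cn

theorem cn_involution_count_general (n : ℕ) :
    (Nat.card {w : Cn n // w ^ 2 = 1} : ℚ) =
      ∑ k ∈ Finset.range (n / 2 + 1),
        (2 : ℚ) ^ n * n.factorial /
          (2 ^ (2 * k) * k.factorial * (n - 2 * k).factorial) := by
  have hfiber (σ : {σ : Equiv.Perm (Fin n) // σ ^ 2 = 1}) :
      Nat.card {x : Fin n → ZMod 2 // ∀ i, x (σ.1 i) = x i} = 2 ^ (n - σ.1.cycleType.card) := by
    rw [Equiv.Perm.card_invariant_fun_of_sq_eq_one _ σ.2, Nat.card_zmod, Fintype.card_fin]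
  rw [Nat.card_congr (Cn.sqEqOneEquiv n), Nat.card_sigma, Fintype.sum_congr _ _ hfiber,
    ← Finset.sum_subtype {σ | σ ^ 2 = 1} (fun σ => by simp)
      fun σ : Equiv.Perm (Fin n) => 2 ^ (n - σ.cycleType.card)]
  push_cast
  simpa using Equiv.Perm.sum_sq_eq_one_two_pow (α := Fin n)

theorem cn_involution_count (n : ℕ) (hn : 1 ≤ n) :
    (Nat.card {w : Cn n // w ^ 2 = 1} : ℚ) =
      ∑ k ∈ Finset.range (n / 2 + 1),
        (2 : ℚ) ^ n * n.factorial /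
          (2 ^ (2 * k) * k.factorial * (n - 2 * k).factorial) :=
  cn_involution_count_general n
end

section
/- For every integer n ≥ 3 with n ≠ 4, the number of subgroups of the hyperoctahedral group C_n that are isomorphic to the symmetric group on n letters is exactly 2^n: Nat.card {H : Subgroup C_n // Nonempty (H ≃* Equiv.Perm (Fin n))} = 2^n. -/
/-!
Let `H ≤ Cₙ = (ℤ/2)ⁿ ⋊ Sₙ` be isomorphic to `Sₙ`. Its intersection with `(ℤ/2)ⁿ` is the kernel of
the projection `H → Sₙ`, a normal subgroup of `H ≅ Sₙ` of exponent `2`. For `n ≥ 3`, `n ≠ 4`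
(where the Klein four-group is one) such a subgroup of `Sₙ` is trivial: a nontrivial element
commutes with its conjugates, which forces it to have no fixed points. That is impossible for an
involution of `3` points, and for `n ≥ 5` the product with a suitable conjugate is nontrivial and
has a fixed point. So `H` maps isomorphically onto `Sₙ`, i.e. it is the graph `{(f σ, σ)}` of a
1-cocycle `f : Sₙ → 𝔽₂ⁿ`, and such subgroups correspond to the cocycles.

Every cocycle is `σ ↦ σ • v - v + d · sign σ`: on the stabiliser `Sₙ₋₁` of a point `z`,
`h ↦ f h z` is a homomorphism to `ℤ/2`, hence a multiple `d` of the sign, and a cocycle vanishing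
there is the coboundary of `i ↦ -f (z i) i`. The pair `(v, d)` is unique up to constant `v`, so
there are `2ⁿ⁺¹ / 2 = 2ⁿ` cocycles.
-/

open Equiv Equiv.Perm

theorem Subgroup.commute_of_forall_sq_eq_one {G : Type*} [Group G] {K : Subgroup G}
    (hK : ∀ k ∈ K, k ^ 2 = 1) {x y : G} (hx : x ∈ K) (hy : y ∈ K) : Commute x y := by
  have inv_eq : ∀ k ∈ K, k⁻¹ = k := fun k hk => inv_eq_of_mul_eq_one_left (sq k ▸ hK k hk)
  calc x * y = (x * y)⁻¹ := (inv_eq _ (K.mul_mem hx hy)).symm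
    _ = y * x := by rw [mul_inv_rev, inv_eq x hx, inv_eq y hy]

theorem Finset.exists_notMem_of_card_lt_fintype_card {β : Type*} [Fintype β] (s : Finset β)
    (h : s.card < Fintype.card β) : ∃ x, x ∉ s := by
  obtain ⟨x, -, hx⟩ := Finset.exists_mem_notMem_of_card_lt_card (t := Finset.univ) h
  exact ⟨x, hx⟩

namespace Equiv.Perm

variable {α : Type*} [DecidableEq α]

section NormalSubgroup

variable {K : Subgroup (Perm α)}

theorem eq_one_of_apply_eq_self_of_normal (hN : K.Normal) (hK : ∀ k ∈ K, k ^ 2 = 1)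
    {k : Perm α} (hk : k ∈ K) {c : α} (hc : k c = c) : k = 1 := by
  by_contra hk1
  obtain ⟨a, ha⟩ : ∃ a, k a ≠ a := by by_contra! h; exact hk1 (Perm.ext h)
  have hca : c ≠ a := by rintro rfl; exact ha hc
  have hcb : c ≠ k a := by rintro h; rw [h, ← mul_apply, ← sq, hK k hk] at hc; exact ha hc.symm
  have hk' : swap (k a) c * k * swap (k a) c ∈ K := by simpa using hN.conj_mem k hk (swap (k a) c)
  -- `k` commutes with `k' = (k a c) k (k a c)`; at `a` this reads `c = k a`
  have := congrArg (· a) (Subgroup.commute_of_forall_sq_eq_one hK hk hk').eq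
  simp [swap_apply_of_ne_of_ne (Ne.symm ha) (Ne.symm hca), hc] at this
  exact hcb this

theorem subgroup_eq_bot_of_normal_of_forall_sq_eq_one [Fintype α] (h3 : 3 ≤ Fintype.card α)
    (h4 : Fintype.card α ≠ 4) (hN : K.Normal) (hK : ∀ k ∈ K, k ^ 2 = 1) : K = ⊥ := by
  rw [Subgroup.eq_bot_iff_forall]
  intro k hk
  obtain hα | hα : Fintype.card α = 3 ∨ 5 ≤ Fintype.card α := by omega
  · have : Fact (Nat.Prime 2) := ⟨Nat.prime_two⟩
    obtain ⟨c, hc⟩ := exists_fixed_point_of_prime (p := 2) (n := 1) (by omega) (hK k hk)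
    exact eq_one_of_apply_eq_self_of_normal hN hK hk hc
  by_contra hk1
  obtain ⟨a, ha⟩ : ∃ a, k a ≠ a := by by_contra! h; exact hk1 (Perm.ext h)
  have hkk (x : α) : k (k x) = x := by rw [← mul_apply, ← sq, hK k hk, one_apply]
  obtain ⟨c, hc⟩ := Finset.exists_notMem_of_card_lt_fintype_card {a, k a}
    (Finset.card_le_two.trans_lt (by omega))
  obtain ⟨e, he⟩ := Finset.exists_notMem_of_card_lt_fintype_card {a, k a, c, k c}
    (Finset.card_le_four.trans_lt (by omega))
  simp only [Finset.mem_insert, Finset.mem_singleton, not_or] at hc he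
  obtain ⟨hca, hcb⟩ := hc
  obtain ⟨hea, heb, hec, hed⟩ := he
  -- `k * k'` with `k' = (k a c) k (k a c)` fixes `e` but moves `a`
  have hk' : swap (k a) c * k * swap (k a) c ∈ K := by simpa using hN.conj_mem k hk (swap (k a) c)
  have hke_b : k e ≠ k a := k.injective.ne hea
  have hke_c : k e ≠ c := fun h => hed (by rw [← h, hkk])
  have := eq_one_of_apply_eq_self_of_normal hN hK (K.mul_mem hk hk') (c := e)
    (by simp [swap_apply_of_ne_of_ne heb hec, swap_apply_of_ne_of_ne hke_b hke_c, hkk])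
  have hkc : k c = a := by
    simpa [swap_apply_of_ne_of_ne (Ne.symm ha) (Ne.symm hca)] using congrArg (· a) this
  exact hcb (by rw [← hkc, hkk])

end NormalSubgroup

variable (α) in
def cocycles : AddSubgroup (Perm α → α → ZMod 2) where
  carrier := {f | ∀ σ τ i, f (σ * τ) i = f σ i + f τ (σ⁻¹ i)}
  add_mem' {f g} hf hg σ τ i := by simp only [Pi.add_apply, hf σ τ i, hg σ τ i]; ring
  zero_mem' _ _ _ := by simp
  neg_mem' {f} hf σ τ i := by simp only [Pi.neg_apply, hf σ τ i]; ring

theorem apply_eq_sub_of_vanishing_on_stabilizer {g : Perm α → α → ZMod 2} (hg : g ∈ cocycles α)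
    {z : α} (hz : ∀ h : Perm α, h z = z → g h z = 0) (σ : Perm α) (i : α) :
    g σ i = g (swap z i) i - g (swap z (σ⁻¹ i)) (σ⁻¹ i) := by
  have hfix : (swap z i * σ * swap z (σ⁻¹ i)) z = z := by simp
  have key : swap z i * (swap z i * σ * swap z (σ⁻¹ i)) = σ * swap z (σ⁻¹ i) := by
    simp [← mul_assoc]
  have := congrArg (g · i) key
  simp only [hg _ _ i, swap_inv, swap_apply_right, hz _ hfix, add_zero] at this
  rw [this, add_sub_cancel_right]

variable [Fintype α]

def signZMod2 (σ : Perm α) : ZMod 2 := if sign σ = 1 then 0 else 1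

@[simp]
theorem signZMod2_one : signZMod2 (1 : Perm α) = 0 := by simp [signZMod2]

theorem signZMod2_mul (σ τ : Perm α) : signZMod2 (σ * τ) = signZMod2 σ + signZMod2 τ := by
  unfold signZMod2
  rcases Int.units_eq_one_or (sign σ) with h | h <;>
    rcases Int.units_eq_one_or (sign τ) with h' | h' <;> simp [h, h', CharTwo.add_self_eq_zero]

theorem signZMod2_swap {a b : α} (h : a ≠ b) : signZMod2 (swap a b) = 1 := by
  simp [signZMod2, sign_swap h]

theorem eq_mul_signZMod2_of_map_mul {φ : Perm α → ZMod 2}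
    (hφ : ∀ σ τ, φ (σ * τ) = φ σ + φ τ) {a b : α} (hab : a ≠ b) (σ : Perm α) :
    φ σ = φ (swap a b) * signZMod2 σ := by
  have map_one : φ 1 = 0 := by simpa using hφ 1 1
  have map_conj (g s : Perm α) : φ (g * s * g⁻¹) = φ s := by
    rw [hφ, hφ, add_right_comm, ← hφ, mul_inv_cancel, map_one, zero_add]
  have map_swap {x y : α} (hxy : x ≠ y) : φ (swap x y) = φ (swap a b) := by
    obtain ⟨g, hg⟩ := isConj_iff.mp (isConj_swap hab hxy)
    rw [← hg, map_conj]
  induction σ using swap_induction_on with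
  | one => simp [map_one]
  | swap_mul σ x y hxy ih =>
    rw [hφ, ih, map_swap hxy, signZMod2_mul, signZMod2_swap hxy]
    ring

theorem apply_eq_mul_signZMod2_on_stabilizer {f : Perm α → α → ZMod 2} (hf : f ∈ cocycles α)
    {z a b : α} (hab : a ≠ b) (ha : a ≠ z) (hb : b ≠ z) {h : Perm α} (hz : h z = z) :
    f h z = f (swap a b) z * signZMod2 h := by
  let φ (π : Perm {x // x ≠ z}) : ZMod 2 := f (ofSubtype π) z
  have hfix (π : Perm {x // x ≠ z}) : ofSubtype π z = z := ofSubtype_apply_of_not_mem π (by simp)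
  have hφ (π π' : Perm {x // x ≠ z}) : φ (π * π') = φ π + φ π' := by
    simp only [φ, map_mul, hf _ _ z, ← map_inv, hfix]
  have h₁ (x : α) : h x ≠ z ↔ x ≠ z := by
    conv_lhs => rw [← hz]
    exact h.injective.ne_iff
  have h₂ (x : α) (hx : h x ≠ x) : x ≠ z := fun hxz => hx (hxz ▸ hz)
  simpa [φ, ofSubtype_subtypePerm h₁ h₂, signZMod2, sign_subtypePerm h h₁ h₂] using
    eq_mul_signZMod2_of_map_mul hφ (a := ⟨a, ha⟩) (b := ⟨b, hb⟩) (by simpa using hab)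
      (h.subtypePerm h₁)

variable (α) in
def cocycleMk : (α → ZMod 2) × ZMod 2 →+ cocycles α where
  toFun p := ⟨fun σ i => p.1 (σ⁻¹ i) - p.1 i + p.2 * signZMod2 σ, fun σ τ i => by
    simp only [mul_inv_rev, mul_apply, signZMod2_mul]
    ring⟩
  map_zero' := by ext; simp
  map_add' p q := by
    ext
    simp only [Prod.fst_add, Prod.snd_add, Pi.add_apply, AddMemClass.coe_add]
    ring

theorem cocycleMk_apply (p : (α → ZMod 2) × ZMod 2) (σ : Perm α) (i : α) :
    (cocycleMk α p : Perm α → α → ZMod 2) σ i = p.1 (σ⁻¹ i) - p.1 i + p.2 * signZMod2 σ := rfl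

theorem cocycleMk_eq_zero_iff {p : (α → ZMod 2) × ZMod 2} (h3 : 3 ≤ Fintype.card α) :
    cocycleMk α p = 0 ↔ p.2 = 0 ∧ ∀ i j, p.1 i = p.1 j := by
  obtain ⟨v, d⟩ := p
  simp only [Subtype.ext_iff, funext_iff, cocycleMk_apply, AddSubgroup.coe_zero, Pi.zero_apply]
  constructor
  · intro h
    obtain ⟨x, y, z, hxy, hxz, hyz⟩ := Fintype.two_lt_card_iff.mp h3
    have hd : d = 0 := by
      simpa [swap_apply_of_ne_of_ne hxz.symm hyz.symm, signZMod2_swap hxy] using h (swap x y) z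
    refine ⟨hd, fun i j => ?_⟩
    simpa [hd, sub_eq_zero, eq_comm] using h (swap i j) i
  · rintro ⟨rfl, hv⟩ σ i
    simp [hv _ i]

theorem card_ker_cocycleMk (h3 : 3 ≤ Fintype.card α) : Nat.card (cocycleMk α).ker = 2 := by
  have : Nonempty α := Fintype.card_pos_iff.mp (by omega)
  let i₀ : α := Classical.arbitrary α
  let e : ZMod 2 ≃ (cocycleMk α).ker :=
    { toFun := fun c => ⟨(fun _ => c, 0), (cocycleMk_eq_zero_iff h3).mpr ⟨rfl, fun _ _ => rfl⟩⟩
      invFun := fun p => p.1.1 i₀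
      left_inv := fun _ => rfl
      right_inv := by
        rintro ⟨⟨v, d⟩, hp⟩
        obtain ⟨rfl, hv⟩ := (cocycleMk_eq_zero_iff h3).mp hp
        ext i
        · exact hv i₀ i
        · rfl }
  rw [← Nat.card_congr e, Nat.card_zmod]

theorem cocycleMk_surjective (h3 : 3 ≤ Fintype.card α) : Function.Surjective (cocycleMk α) := by
  rintro ⟨f, hf⟩
  obtain ⟨z, a, b, hza, hzb, hab⟩ := Fintype.two_lt_card_iff.mp h3
  let δ := f (swap a b) z
  let g := f - (cocycleMk α (0, δ) : Perm α → α → ZMod 2)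
  have hg : g ∈ cocycles α := sub_mem hf (cocycleMk α (0, δ)).2
  have hgz (h : Perm α) (hz : h z = z) : g h z = 0 := by
    simp [g, δ, cocycleMk_apply, apply_eq_mul_signZMod2_on_stabilizer hf hab hza.symm hzb.symm hz]
  refine ⟨(fun i => -g (swap z i) i, δ), Subtype.ext (funext₂ fun σ i => ?_)⟩
  have := apply_eq_sub_of_vanishing_on_stabilizer hg hgz σ i
  simp only [g, Pi.sub_apply, cocycleMk_apply] at this ⊢
  linear_combination -this

theorem card_cocycles (h3 : 3 ≤ Fintype.card α) : Nat.card (cocycles α) = 2 ^ Fintype.card α := by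
  have := (cocycleMk α).ker.card_mul_index
  rw [AddSubgroup.index_ker, AddMonoidHom.range_eq_top.mpr (cocycleMk_surjective h3),
    AddSubgroup.card_top, card_ker_cocycleMk h3, Nat.card_prod, Nat.card_fun, Nat.card_zmod,
    Nat.card_eq_fintype_card (α := α)] at this
  linarith

end Equiv.Perm

namespace Cn

variable {n : ℕ}

theorem sq_eq_one_of_right_eq_one {x : Cn n} (hx : x.right = 1) : x ^ 2 = 1 := by
  ext i
  · simp [sq, hx, CharTwo.add_self_eq_zero]
  · simp [sq, hx]

def sectionOf (f : cocycles (Fin n)) : Perm (Fin n) →* Cn n :=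
  MonoidHom.mk' (fun σ => ⟨Multiplicative.ofAdd (f.1 σ), σ⟩) fun σ τ =>
    SemidirectProduct.ext (congrArg Multiplicative.ofAdd (funext (f.2 σ τ))) rfl

@[simp]
theorem right_sectionOf (f : cocycles (Fin n)) (σ : Perm (Fin n)) : (sectionOf f σ).right = σ :=
  rfl

theorem sectionOf_injective (f : cocycles (Fin n)) : Function.Injective (sectionOf f) :=
  fun σ τ h => by simpa using congrArg SemidirectProduct.right h

theorem exists_sectionOf_eq {s : Perm (Fin n) →* Cn n} (hs : ∀ σ, (s σ).right = σ) :
    ∃ f, sectionOf f = s := by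
  refine ⟨⟨fun σ => Multiplicative.toAdd (s σ).left, fun σ τ i => ?_⟩, ?_⟩
  · have := congrArg SemidirectProduct.left (map_mul s σ τ)
    rw [SemidirectProduct.mul_left, hs] at this
    exact congrFun (congrArg Multiplicative.toAdd this) i
  · ext σ <;> simp [sectionOf, hs]

theorem range_sectionOf_injective :
    Function.Injective fun f : cocycles (Fin n) => (sectionOf f).range := by
  intro f g h
  ext σ i
  obtain ⟨τ, hτ⟩ : sectionOf f σ ∈ (sectionOf g).range := by
    simp only at h
    rw [← h]
    exact ⟨σ, rfl⟩
  obtain rfl : τ = σ := by simpa using congrArg SemidirectProduct.right hτ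
  exact congrFun (congrArg Multiplicative.toAdd (congrArg SemidirectProduct.left hτ)).symm i

theorem rightHom_comp_subtype_injective (h3 : 3 ≤ n) (h4 : n ≠ 4) {H : Subgroup (Cn n)}
    (e : H ≃* Perm (Fin n)) :
    Function.Injective (SemidirectProduct.rightHom.comp H.subtype) := by
  set r := SemidirectProduct.rightHom.comp H.subtype
  have hK : r.ker.map e.toMonoidHom = ⊥ := by
    refine subgroup_eq_bot_of_normal_of_forall_sq_eq_one (by simpa using h3) (by simpa using h4)
      ((MonoidHom.normal_ker r).map _ e.surjective) ?_
    rintro _ ⟨x, hx, rfl⟩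
    have hx2 : x ^ 2 = 1 := Subtype.ext (sq_eq_one_of_right_eq_one hx)
    rw [← map_pow, hx2, map_one]
  exact r.ker_eq_bot_iff.mp ((r.ker.map_eq_bot_iff_of_injective e.injective).mp hK)

theorem exists_range_sectionOf_eq {H : Subgroup (Cn n)}
    (hH : Function.Bijective (SemidirectProduct.rightHom.comp H.subtype)) :
    ∃ f, (sectionOf f).range = H := by
  let q := MulEquiv.ofBijective _ hH
  obtain ⟨f, hf⟩ := exists_sectionOf_eq (s := H.subtype.comp q.symm.toMonoidHom)
    fun σ => q.apply_symm_apply σ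
  refine ⟨f, ?_⟩
  rw [hf, MonoidHom.range_comp, MonoidHom.range_eq_top.mpr q.symm.surjective,
    ← MonoidHom.range_eq_map, H.range_subtype]

end Cn

theorem cn_symmetric_subgroup_count (n : ℕ) (h3 : 3 ≤ n) (h4 : n ≠ 4) :
    Nat.card {H : Subgroup (Cn n) // Nonempty (H ≃* Equiv.Perm (Fin n))} = 2 ^ n := by
  let Φ : cocycles (Fin n) → {H : Subgroup (Cn n) // Nonempty (H ≃* Perm (Fin n))} :=
    fun f => ⟨(Cn.sectionOf f).range,
      ⟨(MonoidHom.ofInjective (Cn.sectionOf_injective f)).symm⟩⟩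
  have hΦ : Function.Bijective Φ := by
    refine ⟨fun f g h => Cn.range_sectionOf_injective (congrArg Subtype.val h), ?_⟩
    rintro ⟨H, ⟨e⟩⟩
    obtain ⟨f, hf⟩ := Cn.exists_range_sectionOf_eq <|
      (Cn.rightHom_comp_subtype_injective h3 h4 e).bijective_of_nat_card_le
        (Nat.card_congr e.toEquiv).ge
    exact ⟨f, Subtype.ext hf⟩
  rw [← Nat.card_congr (Equiv.ofBijective Φ hΦ), card_cocycles (by simpa using h3),
    Fintype.card_fin]
end
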